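/- arXiv:2406.05095 — 2 statements merged into one kernel-verified Lean document; each statement's English description precedes it below -/
import Mathlib

section
/- Let G be a loopless multigraph and F : V(G) → finite sets of naturals with |F(v)| < d(v)/2 for all v. If G has no F-avoiding orientation and |E(G)| + |V(G)| is minimum among all such counterexamples, then every vertex of G has degree at least 3. -/
attribute [local instance] Classical.propDecidable

/-- A loopless multigraph: edges indexed by `E` with endpoints in `Sym2 V`. -/
structure Multigraph (V E : Type) where
  ends : E → Sym2 V
  loopless : ∀ e, ¬ (ends e).IsDiag

namespace Multigraph

variable {V E : Type}

/-- Degree of a vertex: number of edges incident to it. -/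
noncomputable def deg [Fintype E] (G : Multigraph V E) (v : V) : ℕ :=
  (Finset.univ.filter fun e => v ∈ G.ends e).card

/-- Two vertices are adjacent if some edge joins them. -/
def Adj (G : Multigraph V E) (u v : V) : Prop :=
  u ≠ v ∧ ∃ e, G.ends e = s(u, v)

/-- An orientation assigns a tail and head to each edge, consistent with its endpoints. -/
structure Orientation (G : Multigraph V E) where
  tail : E → V
  head : E → V
  consistent : ∀ e, G.ends e = s(tail e, head e)

/-- Out-degree of a vertex in an orientation. -/
noncomputable def Orientation.outDeg [Fintype E] {G : Multigraph V E} (D : G.Orientation)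
    (v : V) : ℕ :=
  (Finset.univ.filter fun e => D.tail e = v).card

/-- An orientation is `F`-avoiding if no vertex has out-degree in its forbidden list. -/
def Orientation.Avoids [Fintype E] {G : Multigraph V E} (D : G.Orientation)
    (F : V → Finset ℕ) : Prop :=
  ∀ v, D.outDeg v ∉ F v

/-- Number of edges with both endpoints in `S`. -/
noncomputable def eIn [Fintype E] (G : Multigraph V E) (S : Finset V) : ℕ :=
  (Finset.univ.filter fun e => ∀ w ∈ G.ends e, w ∈ S).card

/-- Number of edges with exactly one endpoint in `S`. -/
noncomputable def cut [Fintype E] (G : Multigraph V E) (S : Finset V) : ℕ :=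
  (Finset.univ.filter fun e => (∃ w ∈ G.ends e, w ∈ S) ∧ ¬ ∀ w ∈ G.ends e, w ∈ S).card

/-- Reachability by directed paths in an orientation. -/
def Orientation.Reach {G : Multigraph V E} (D : G.Orientation) : V → V → Prop :=
  Relation.ReflTransGen fun a b => ∃ e, D.tail e = a ∧ D.head e = b

end Multigraph

open Finset

section Ncard

lemma ncard_filter {α : Type} [Fintype α] (P : α → Prop) {inst : DecidablePred P} :
    (@Finset.filter α P inst Finset.univ).card = Nat.card {a // P a} := by
  rw [Nat.card_eq_fintype_card]
  exact (Fintype.card_of_subtype _ (fun x => by simp)).symm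

lemma ncard_iff {α : Type} (P Q : α → Prop) (h : ∀ a, P a ↔ Q a) :
    Nat.card {a // P a} = Nat.card {a // Q a} :=
  Nat.card_congr (Equiv.subtypeEquivRight h)

lemma ncard_sum {α β : Type} [Finite α] [Finite β] (P : α ⊕ β → Prop) :
    Nat.card {x // P x} = Nat.card {a // P (Sum.inl a)} + Nat.card {b // P (Sum.inr b)} := by
  rw [← Nat.card_sum]
  exact Nat.card_congr Equiv.subtypeSum

lemma ncard_subtype {α : Type} (q : α → Prop) (P : Subtype q → Prop) :
    Nat.card {x // P x} = Nat.card {a // ∃ h : q a, P ⟨a, h⟩} :=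
  Nat.card_congr (Equiv.subtypeSubtypeEquivSubtypeExists _ _)

lemma ncard_partition {α : Type} [Finite α] (P Q : α → Prop) :
    Nat.card {a // P a} = Nat.card {a // P a ∧ Q a} + Nat.card {a // P a ∧ ¬ Q a} := by
  classical
  calc Nat.card {a // P a}
      = Nat.card ({x : {a // P a} // Q x.val} ⊕ {x : {a // P a} // ¬ Q x.val}) :=
        Nat.card_congr (Equiv.sumCompl _).symm
    _ = _ := by
        rw [Nat.card_sum]
        congr 1
        · exact Nat.card_congr ((Equiv.subtypeSubtypeEquivSubtypeExists _ _).trans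
            (Equiv.subtypeEquivRight fun a => by tauto))
        · exact Nat.card_congr ((Equiv.subtypeSubtypeEquivSubtypeExists _ _).trans
            (Equiv.subtypeEquivRight fun a => by tauto))

lemma ncard_compl {α : Type} [Finite α] (P : α → Prop) :
    Nat.card {a // P a} + Nat.card {a // ¬ P a} = Nat.card α := by
  classical
  rw [← Nat.card_sum]
  exact Nat.card_congr (Equiv.sumCompl P)

lemma ncard_eq_ite {α : Type} (e : α) (P : α → Prop) [Decidable (P e)] :
    Nat.card {x // x = e ∧ P x} = if P e then 1 else 0 := by
  split_ifs with h
  · rw [Nat.card_eq_one_iff_unique]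
    exact ⟨⟨fun a b => Subtype.ext (a.2.1.trans b.2.1.symm)⟩, ⟨⟨e, rfl, h⟩⟩⟩
  · have : IsEmpty {x // x = e ∧ P x} := ⟨fun x => h (x.2.1 ▸ x.2.2)⟩
    exact Nat.card_of_isEmpty

lemma ncard_single {α : Type} (e : α) : Nat.card {x // x = e} = 1 := by
  rw [Nat.card_eq_one_iff_unique]
  exact ⟨⟨fun a b => Subtype.ext (a.2.trans b.2.symm)⟩, ⟨⟨e, rfl⟩⟩⟩

lemma ncard_pair {α : Type} [Finite α] {e1 e2 : α} (hne : e1 ≠ e2) (P : α → Prop)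
    [Decidable (P e1)] [Decidable (P e2)] :
    Nat.card {x // (x = e1 ∨ x = e2) ∧ P x}
      = (if P e1 then 1 else 0) + (if P e2 then 1 else 0) := by
  classical
  rw [ncard_partition (fun x => (x = e1 ∨ x = e2) ∧ P x) (fun x => x = e1)]
  congr 1
  · rw [ncard_iff _ (fun x => x = e1 ∧ P x) (fun a => by tauto)]
    convert ncard_eq_ite e1 P using 2
  · rw [ncard_iff _ (fun x => x = e2 ∧ P x) (fun a => by
      constructor
      · rintro ⟨⟨h | h, hP⟩, hne1⟩
        · exact absurd h hne1
        · exact ⟨h, hP⟩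
      · rintro ⟨rfl, hP⟩
        exact ⟨⟨Or.inr rfl, hP⟩, fun h => hne h.symm⟩)]
    convert ncard_eq_ite e2 P using 2

lemma ncard_empty (P : Empty → Prop) : Nat.card {x // P x} = 0 := by
  have : IsEmpty {x // P x} := ⟨fun x => x.1.elim⟩
  exact Nat.card_of_isEmpty

lemma ncard_punit (P : PUnit.{1} → Prop) [Decidable (P PUnit.unit)] :
    Nat.card {x // P x} = if P PUnit.unit then 1 else 0 := by
  refine (ncard_iff _ (fun x => x = PUnit.unit ∧ P x) fun a => by
    cases a; simp).trans ?_
  convert ncard_eq_ite PUnit.unit P using 2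

lemma mem_attachWith {α : Type} {P : α → Prop} {s : Sym2 α} (h : ∀ a ∈ s, P a)
    (x : {a // P a}) : x ∈ s.attachWith h ↔ x.val ∈ s := by
  unfold Sym2.attachWith
  rw [Sym2.mem_pmap_iff]
  constructor
  · rintro ⟨a, ha, rfl⟩; exact ha
  · intro hx; exact ⟨x.val, hx, Subtype.ext rfl⟩

lemma card_filter_succ_lt {F : Finset ℕ} (hne : F.Nonempty) :
    (F.filter fun n => n + 1 ∈ F).card < F.card := by
  apply Finset.card_lt_card
  rw [Finset.ssubset_iff_of_subset (Finset.filter_subset _ _)]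
  refine ⟨F.max' hne, F.max'_mem hne, fun hmem => ?_⟩
  rw [mem_filter] at hmem
  exact absurd (F.le_max' _ hmem.2) (by omega)

lemma ncard_split {α : Type} [Finite α] (T : Finset α) (P : α → Prop) :
    Nat.card {a // P a} = Nat.card {a // a ∈ T ∧ P a} + Nat.card {a // a ∉ T ∧ P a} := by
  rw [ncard_partition P (fun a => a ∈ T)]
  congr 1 <;> exact ncard_iff _ _ fun a => by tauto

lemma ncard_mem_single {α : Type} (e : α) (P : α → Prop) [Decidable (P e)] :
    Nat.card {x // x ∈ ({e} : Finset α) ∧ P x} = if P e then 1 else 0 := by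
  rw [ncard_iff _ (fun x => x = e ∧ P x) fun a => by simp]
  exact ncard_eq_ite e P

lemma ncard_mem_pair {α : Type} [Finite α] {e1 e2 : α} (hne : e1 ≠ e2) (P : α → Prop)
    [Decidable (P e1)] [Decidable (P e2)] :
    Nat.card {x // x ∈ ({e1, e2} : Finset α) ∧ P x}
      = (if P e1 then 1 else 0) + (if P e2 then 1 else 0) := by
  rw [ncard_iff _ (fun x => (x = e1 ∨ x = e2) ∧ P x) fun a => by simp]
  exact ncard_pair hne P

lemma ncard_mem_single' {α : Type} (e : α) :
    Nat.card {x // x ∈ ({e} : Finset α)} = 1 := by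
  rw [ncard_iff _ (fun x => x = e) fun a => by simp]
  exact ncard_single e

lemma ncard_mem_pair' {α : Type} [Finite α] {e1 e2 : α} (hne : e1 ≠ e2) :
    Nat.card {x // x ∈ ({e1, e2} : Finset α)} = 2 := by
  classical
  rw [ncard_iff _ (fun x => (x = e1 ∨ x = e2) ∧ True) fun a => by simp]
  rw [ncard_pair hne]
  simp

end Ncard

set_option linter.unusedSectionVars false

namespace Multigraph

lemma deg_eq {V E : Type} [Fintype E] (G : Multigraph V E) (v : V) :
    G.deg v = Nat.card {e // v ∈ G.ends e} := ncard_filter _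

lemma outDeg_eq {V E : Type} [Fintype E] {G : Multigraph V E} (D : G.Orientation) (v : V) :
    D.outDeg v = Nat.card {e // D.tail e = v} := ncard_filter _

variable {V E N : Type} [Fintype V] [Fintype E] [Fintype N]

variable (G : Multigraph V E) (S : Finset V) (T : Finset E)

noncomputable def reduce
    (hND : ∀ e (_ : e ∉ T), ∀ w ∈ G.ends e, w ∉ S)
    (newEnds : N → Sym2 {u : V // u ∉ S}) (hN : ∀ n, ¬ (newEnds n).IsDiag) :
    Multigraph {u : V // u ∉ S} ({e : E // e ∉ T} ⊕ N) where
  ends := fun x => match x with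
    | .inl e => (G.ends e.1).attachWith (hND e.1 e.2)
    | .inr n => newEnds n
  loopless := fun x => match x with
    | .inl e => fun hd => G.loopless e.1 (by
        have := hd.map (f := Subtype.val)
        rwa [Sym2.attachWith_map_subtypeVal] at this)
    | .inr n => hN n

variable (hND : ∀ e (_ : e ∉ T), ∀ w ∈ G.ends e, w ∉ S)
    (newEnds : N → Sym2 {u : V // u ∉ S}) (hN : ∀ n, ¬ (newEnds n).IsDiag)

@[simp] lemma reduce_ends_inl (e : {e : E // e ∉ T}) :
    (G.reduce S T hND newEnds hN).ends (.inl e) = (G.ends e.1).attachWith (hND e.1 e.2) := rfl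

@[simp] lemma reduce_ends_inr (n : N) :
    (G.reduce S T hND newEnds hN).ends (.inr n) = newEnds n := rfl

lemma reduce_deg (u : V) (hu : u ∉ S) :
    (G.reduce S T hND newEnds hN).deg ⟨u, hu⟩
      = Nat.card {e : E // e ∉ T ∧ u ∈ G.ends e}
      + Nat.card {n : N // (⟨u, hu⟩ : {u // u ∉ S}) ∈ newEnds n} := by
  have h0 : (G.reduce S T hND newEnds hN).deg ⟨u, hu⟩
      = Nat.card {x : {e : E // e ∉ T} ⊕ N //
          (⟨u, hu⟩ : {u // u ∉ S}) ∈ (G.reduce S T hND newEnds hN).ends x} := ncard_filter _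
  rw [h0, ncard_sum]
  congr 1
  · rw [ncard_subtype]
    exact ncard_iff _ _ fun e => by
      simp only [reduce_ends_inl, mem_attachWith]
      tauto

noncomputable def extend (D' : (G.reduce S T hND newEnds hN).Orientation)
    (t h : E → V) (hth : ∀ e ∈ T, G.ends e = s(t e, h e)) : G.Orientation where
  tail := fun e => if he : e ∈ T then t e else (D'.tail (.inl ⟨e, he⟩)).val
  head := fun e => if he : e ∈ T then h e else (D'.head (.inl ⟨e, he⟩)).val
  consistent := fun e => by
    by_cases he : e ∈ T
    · simpa [he] using hth e he
    · simp only [he, dite_false]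
      have hc := D'.consistent (.inl ⟨e, he⟩)
      rw [reduce_ends_inl] at hc
      have := congrArg (Sym2.map Subtype.val) hc
      rwa [Sym2.attachWith_map_subtypeVal, Sym2.map_pair_eq] at this

lemma extend_tail_mem (D' : (G.reduce S T hND newEnds hN).Orientation)
    (t h : E → V) (hth : ∀ e ∈ T, G.ends e = s(t e, h e)) (e : E) (he : e ∈ T) :
    (G.extend S T hND newEnds hN D' t h hth).tail e = t e := dif_pos he

lemma extend_tail_notMem (D' : (G.reduce S T hND newEnds hN).Orientation)
    (t h : E → V) (hth : ∀ e ∈ T, G.ends e = s(t e, h e)) (e : E) (he : e ∉ T) :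
    (G.extend S T hND newEnds hN D' t h hth).tail e = (D'.tail (.inl ⟨e, he⟩)).val :=
  dif_neg he

lemma extend_outDeg_mem (D' : (G.reduce S T hND newEnds hN).Orientation)
    (t h : E → V) (hth : ∀ e ∈ T, G.ends e = s(t e, h e))
    (u : V) (hu : u ∈ S) :
    (G.extend S T hND newEnds hN D' t h hth).outDeg u
      = Nat.card {e : E // e ∈ T ∧ t e = u} := by
  rw [outDeg_eq,
    ncard_partition (fun e => (G.extend S T hND newEnds hN D' t h hth).tail e = u)
      (fun e => e ∈ T)]
  have h2 : Nat.card {e : E //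
      ((G.extend S T hND newEnds hN D' t h hth).tail e = u) ∧ ¬ e ∈ T} = 0 := by
    have : IsEmpty {e : E //
        ((G.extend S T hND newEnds hN D' t h hth).tail e = u) ∧ ¬ e ∈ T} := by
      refine ⟨fun x => ?_⟩
      obtain ⟨e, h1, he⟩ := x
      rw [extend_tail_notMem G S T hND newEnds hN D' t h hth e he] at h1
      exact (D'.tail (.inl ⟨e, he⟩)).2 (h1 ▸ hu)
    exact Nat.card_of_isEmpty
  have h1 : Nat.card {e : E //
      ((G.extend S T hND newEnds hN D' t h hth).tail e = u) ∧ e ∈ T}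
      = Nat.card {e : E // e ∈ T ∧ t e = u} := by
    refine ncard_iff _ _ fun e => ?_
    constructor
    · rintro ⟨h1, he⟩
      rw [extend_tail_mem G S T hND newEnds hN D' t h hth e he] at h1
      exact ⟨he, h1⟩
    · rintro ⟨he, h1⟩
      exact ⟨(extend_tail_mem G S T hND newEnds hN D' t h hth e he).trans h1, he⟩
  omega

lemma extend_outDeg_notMem (D' : (G.reduce S T hND newEnds hN).Orientation)
    (t h : E → V) (hth : ∀ e ∈ T, G.ends e = s(t e, h e))
    (u : V) (hu : u ∉ S) :
    (G.extend S T hND newEnds hN D' t h hth).outDeg u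
      + Nat.card {n : N // D'.tail (.inr n) = ⟨u, hu⟩}
    = D'.outDeg ⟨u, hu⟩ + Nat.card {e : E // e ∈ T ∧ t e = u} := by
  have key2 : D'.outDeg ⟨u, hu⟩
      = Nat.card {e' : {e : E // e ∉ T} // D'.tail (.inl e') = ⟨u, hu⟩}
      + Nat.card {n : N // D'.tail (.inr n) = ⟨u, hu⟩} := by
    rw [outDeg_eq, ncard_sum]
  have key : (G.extend S T hND newEnds hN D' t h hth).outDeg u
      = Nat.card {e : E // e ∈ T ∧ t e = u}
      + Nat.card {e' : {e : E // e ∉ T} // D'.tail (.inl e') = ⟨u, hu⟩} := by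
    rw [outDeg_eq,
      ncard_partition (fun e => (G.extend S T hND newEnds hN D' t h hth).tail e = u)
        (fun e => e ∈ T)]
    congr 1
    · refine ncard_iff _ _ fun e => ?_
      constructor
      · rintro ⟨h1, he⟩
        rw [extend_tail_mem G S T hND newEnds hN D' t h hth e he] at h1
        exact ⟨he, h1⟩
      · rintro ⟨he, h1⟩
        exact ⟨(extend_tail_mem G S T hND newEnds hN D' t h hth e he).trans h1, he⟩
    · rw [ncard_subtype]
      refine ncard_iff _ _ fun e => ?_
      constructor
      · rintro ⟨h1, he⟩
        rw [extend_tail_notMem G S T hND newEnds hN D' t h hth e he] at h1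
        exact ⟨he, Subtype.ext h1⟩
      · rintro ⟨he, h1⟩
        exact ⟨(extend_tail_notMem G S T hND newEnds hN D' t h hth e he).trans
          (congrArg Subtype.val h1), he⟩
  omega

lemma reduce_cardE :
    Fintype.card ({e : E // e ∉ T} ⊕ N) + Nat.card {e : E // e ∈ T}
      = Fintype.card E + Fintype.card N := by
  have h1 := ncard_compl (fun e : E => e ∈ T)
  rw [Fintype.card_sum, ← Nat.card_eq_fintype_card (α := {e : E // e ∉ T}),
    ← Nat.card_eq_fintype_card (α := E)]
  omega

lemma reduce_cardV :
    Fintype.card {u : V // u ∉ S} + Nat.card {u : V // u ∈ S} = Fintype.card V := by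
  have h1 := ncard_compl (fun u : V => u ∈ S)
  rw [← Nat.card_eq_fintype_card (α := {u : V // u ∉ S}),
    ← Nat.card_eq_fintype_card (α := V)]
  omega

lemma extend_avoids (D' : (G.reduce S T hND newEnds hN).Orientation)
    (t h : E → V) (hth : ∀ e ∈ T, G.ends e = s(t e, h e)) (F : V → Finset ℕ)
    (C1 : ∀ u ∈ S, Nat.card {e : E // e ∈ T ∧ t e = u} ∉ F u)
    (C2 : ∀ u (hu : u ∉ S) (k : ℕ),
      k + Nat.card {n : N // D'.tail (.inr n) = ⟨u, hu⟩}
        = D'.outDeg ⟨u, hu⟩ + Nat.card {e : E // e ∈ T ∧ t e = u} → k ∉ F u) :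
    (G.extend S T hND newEnds hN D' t h hth).Avoids F := by
  intro u
  by_cases hu : u ∈ S
  · rw [extend_outDeg_mem G S T hND newEnds hN D' t h hth u hu]
    exact C1 u hu
  · exact C2 u hu _ (extend_outDeg_notMem G S T hND newEnds hN D' t h hth u hu)

end Multigraph

theorem stmt3 {V E : Type} [Fintype V] [Fintype E] (G : Multigraph V E) (F : V → Finset ℕ)
    (hF : ∀ v, 2 * (F v).card < G.deg v)
    (hno : ¬ ∃ D : G.Orientation, D.Avoids F)
    (hmin : ∀ (V' E' : Type) [Fintype V'] [Fintype E'] (G' : Multigraph V' E')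
      (F' : V' → Finset ℕ),
      Fintype.card E' + Fintype.card V' < Fintype.card E + Fintype.card V →
      (∀ v, 2 * (F' v).card < G'.deg v) →
      ∃ D : G'.Orientation, D.Avoids F') :
    ∀ v : V, 3 ≤ G.deg v := by
  classical
  intro v
  by_contra hdeg3
  push_neg at hdeg3
  have hFve : F v = ∅ := by
    have := hF v
    rw [← Finset.card_eq_zero]
    omega
  have hdegpos : 0 < G.deg v := by
    have := hF v
    omega
  rcases (show G.deg v = 1 ∨ G.deg v = 2 by omega) with hd | hd
  · -- deg v = 1
    rw [Multigraph.deg] at hd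
    obtain ⟨e, he⟩ := Finset.card_eq_one.mp hd
    have hve : v ∈ G.ends e := by
      have := Finset.mem_singleton_self e
      rw [← he] at this
      exact (Finset.mem_filter.mp this).2
    have huniq : ∀ e', v ∈ G.ends e' → e' = e := by
      intro e' h'
      have : e' ∈ Finset.univ.filter fun x => v ∈ G.ends x :=
        Finset.mem_filter.mpr ⟨Finset.mem_univ _, h'⟩
      rw [he] at this
      exact Finset.mem_singleton.mp this
    set u := Sym2.Mem.other hve with hu_def
    have hspec : s(v, u) = G.ends e := Sym2.other_spec hve
    have hunv : u ≠ v := Sym2.other_ne (G.loopless e) hve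
    have hue : u ∈ G.ends e := by rw [← hspec]; exact Sym2.mem_mk_right v u
    have hmem_e : ∀ w, w ∈ G.ends e ↔ (w = v ∨ w = u) := fun w => by
      rw [← hspec, Sym2.mem_iff]
    by_cases hdu : G.deg u = 1
    · -- delete v, u, e
      have hFue : F u = ∅ := by
        have := hF u
        rw [← Finset.card_eq_zero]
        omega
      have huuniq : ∀ e', u ∈ G.ends e' → e' = e := by
        rw [Multigraph.deg] at hdu
        obtain ⟨eu, heu⟩ := Finset.card_eq_one.mp hdu
        have h1 : e ∈ Finset.univ.filter fun x => u ∈ G.ends x :=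
          Finset.mem_filter.mpr ⟨Finset.mem_univ _, hue⟩
        rw [heu] at h1
        intro e' h'
        have h2 : e' ∈ Finset.univ.filter fun x => u ∈ G.ends x :=
          Finset.mem_filter.mpr ⟨Finset.mem_univ _, h'⟩
        rw [heu] at h2
        rw [Finset.mem_singleton] at h1 h2
        rw [h2, h1]
      have hND : ∀ e' (_ : e' ∉ ({e} : Finset E)), ∀ w ∈ G.ends e', w ∉ ({v, u} : Finset V) := by
        intro e' he' w hw hwS
        rcases Finset.mem_insert.mp hwS with rfl | hw2
        · exact he' (Finset.mem_singleton.mpr (huniq e' hw))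
        · rw [Finset.mem_singleton] at hw2
          subst hw2
          exact he' (Finset.mem_singleton.mpr (huuniq e' hw))
      let newEnds : Empty → Sym2 {w : V // w ∉ ({v, u} : Finset V)} := fun n => n.elim
      have hN : ∀ n, ¬ (newEnds n).IsDiag := fun n => n.elim
      set G' := G.reduce {v, u} {e} hND newEnds hN with hG'
      set F' : {w : V // w ∉ ({v, u} : Finset V)} → Finset ℕ := fun w => F w.val with hF'def
      have hF' : ∀ w, 2 * (F' w).card < G'.deg w := by
        rintro ⟨w, hw⟩
        rw [hG', Multigraph.reduce_deg, ncard_empty]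
        have hsplit := ncard_split ({e} : Finset E) (fun e' => w ∈ G.ends e')
        have hzero : Nat.card {e' : E // e' ∈ ({e} : Finset E) ∧ w ∈ G.ends e'} = 0 := by
          rw [ncard_mem_single e (fun e' => w ∈ G.ends e'), if_neg]
          intro hw2
          rcases (hmem_e w).mp hw2 with rfl | rfl
          · exact hw (Finset.mem_insert_self _ _)
          · exact hw (Finset.mem_insert_of_mem (Finset.mem_singleton_self _))
        have hdw := G.deg_eq w
        have hFF : F' ⟨w, hw⟩ = F w := rfl
        rw [hFF]
        have := hF w
        omega
      have hlt : Fintype.card ({e' : E // e' ∉ ({e} : Finset E)} ⊕ Empty)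
          + Fintype.card {w : V // w ∉ ({v, u} : Finset V)}
          < Fintype.card E + Fintype.card V := by
        have hcE := Multigraph.reduce_cardE (N := Empty) ({e} : Finset E)
        have hcV := Multigraph.reduce_cardV ({v, u} : Finset V)
        have h1 := ncard_mem_single' e
        have h2 := ncard_mem_pair' (Ne.symm hunv)
        have h3 : Fintype.card Empty = 0 := Fintype.card_eq_zero
        omega
      obtain ⟨D', hD'⟩ := hmin _ _ G' F' hlt hF'
      have hth : ∀ e' ∈ ({e} : Finset E),
          G.ends e' = s((fun _ : E => v) e', (fun _ : E => u) e') := by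
        intro e' he'
        rw [Finset.mem_singleton] at he'
        subst he'
        exact hspec.symm
      apply hno
      refine ⟨G.extend {v, u} {e} hND newEnds hN D'
        (fun _ => v) (fun _ => u) hth, ?_⟩
      apply Multigraph.extend_avoids
      · intro w hw
        rcases Finset.mem_insert.mp hw with hwv | hw2
        · rw [show w = v from hwv]
          rw [ncard_mem_single e (fun e' => (fun _ : E => v) e' = v), if_pos rfl, hFve]
          exact Finset.notMem_empty _
        · rw [Finset.mem_singleton] at hw2
          subst hw2
          rw [ncard_mem_single e (fun e' => (fun _ : E => v) e' = u), if_neg (Ne.symm hunv),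
            hFue]
          exact Finset.notMem_empty _
      · intro w hw k hk
        rw [ncard_empty, ncard_mem_single e (fun e' => (fun _ : E => v) e' = w),
          if_neg (fun hvw : v = w => hw (hvw ▸ Finset.mem_insert_self _ _))] at hk
        have : k = D'.outDeg ⟨w, hw⟩ := by omega
        rw [this]
        exact hD' ⟨w, hw⟩
    · -- deg u ≥ 2
      have hu_notS : u ∉ ({v} : Finset V) := by
        simp only [Finset.mem_singleton]
        exact hunv
      have hdu2 : 2 ≤ G.deg u := by
        have hdeq := G.deg_eq u
        have hsplit := ncard_split ({e} : Finset E) (fun e' => u ∈ G.ends e')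
        have h1 : Nat.card {e' : E // e' ∈ ({e} : Finset E) ∧ u ∈ G.ends e'} = 1 := by
          rw [ncard_mem_single e (fun e' => u ∈ G.ends e'), if_pos hue]
        omega
      have hND : ∀ e' (_ : e' ∉ ({e} : Finset E)), ∀ w ∈ G.ends e', w ∉ ({v} : Finset V) := by
        intro e' he' w hw hwS
        rw [Finset.mem_singleton] at hwS
        exact he' (Finset.mem_singleton.mpr (huniq e' (by rwa [hwS] at hw)))
      let newEnds : Empty → Sym2 {w : V // w ∉ ({v} : Finset V)} := fun n => n.elim
      have hN : ∀ n, ¬ (newEnds n).IsDiag := fun n => n.elim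
      set G' := G.reduce {v} {e} hND newEnds hN with hG'
      set F' : {w : V // w ∉ ({v} : Finset V)} → Finset ℕ :=
        fun w => if w.val = u then (F u).filter (fun n => n + 1 ∈ F u) else F w.val with hF'def
      have hF' : ∀ w, 2 * (F' w).card < G'.deg w := by
        rintro ⟨w, hw⟩
        rw [hG', Multigraph.reduce_deg, ncard_empty]
        have hsplit := ncard_split ({e} : Finset E) (fun e' => w ∈ G.ends e')
        have hdw := G.deg_eq w
        by_cases hwu : w = u
        · have hFF : F' ⟨w, hw⟩ = (F u).filter (fun n => n + 1 ∈ F u) := if_pos hwu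
          rw [hFF]
          have h1 : Nat.card {e' : E // e' ∈ ({e} : Finset E) ∧ w ∈ G.ends e'} = 1 := by
            rw [ncard_mem_single e (fun e' => w ∈ G.ends e'), if_pos (by rw [hwu]; exact hue)]
          rcases (F u).eq_empty_or_nonempty with hFu | hFu
          · rw [hFu]
            simp only [Finset.filter_empty, Finset.card_empty]
            have hdwu : G.deg w = G.deg u := by rw [hwu]
            omega
          · have hlt2 := card_filter_succ_lt hFu
            have hFub := hF u
            have hdwu : G.deg w = G.deg u := by rw [hwu]
            omega
        · have hFF : F' ⟨w, hw⟩ = F w := if_neg hwu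
          rw [hFF]
          have h0 : Nat.card {e' : E // e' ∈ ({e} : Finset E) ∧ w ∈ G.ends e'} = 0 := by
            rw [ncard_mem_single e (fun e' => w ∈ G.ends e'), if_neg]
            intro hw2
            rcases (hmem_e w).mp hw2 with h | h
            · exact hw (by rw [h]; exact Finset.mem_singleton_self v)
            · exact hwu h
          have := hF w
          omega
      have hlt : Fintype.card ({e' : E // e' ∉ ({e} : Finset E)} ⊕ Empty)
          + Fintype.card {w : V // w ∉ ({v} : Finset V)}
          < Fintype.card E + Fintype.card V := by
        have hcE := Multigraph.reduce_cardE (N := Empty) ({e} : Finset E)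
        have hcV := Multigraph.reduce_cardV ({v} : Finset V)
        have h1 := ncard_mem_single' e
        have h2 := ncard_mem_single' v
        have h3 : Fintype.card Empty = 0 := Fintype.card_eq_zero
        omega
      obtain ⟨D', hD'⟩ := hmin _ _ G' F' hlt hF'
      have hm' : D'.outDeg ⟨u, hu_notS⟩ ∉ (F u).filter (fun n => n + 1 ∈ F u) := by
        have h2 := hD' ⟨u, hu_notS⟩
        have hFF : F' ⟨u, hu_notS⟩ = (F u).filter (fun n => n + 1 ∈ F u) := if_pos rfl
        rwa [hFF] at h2
      by_cases hm : D'.outDeg ⟨u, hu_notS⟩ ∈ F u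
      · -- orient e from u to v
        have hm1 : D'.outDeg ⟨u, hu_notS⟩ + 1 ∉ F u := fun h1 =>
          hm' (Finset.mem_filter.mpr ⟨hm, h1⟩)
        have hth : ∀ e' ∈ ({e} : Finset E),
            G.ends e' = s((fun _ : E => u) e', (fun _ : E => v) e') := by
          intro e' he'
          rw [Finset.mem_singleton] at he'
          subst he'
          rw [← hspec, Sym2.eq_swap]
        apply hno
        refine ⟨G.extend {v} {e} hND newEnds hN D' (fun _ => u) (fun _ => v) hth, ?_⟩
        apply Multigraph.extend_avoids
        · intro w hw
          rw [Finset.mem_singleton] at hw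
          rw [show w = v from hw]
          rw [ncard_mem_single e (fun e' => (fun _ : E => u) e' = v), if_neg hunv, hFve]
          exact Finset.notMem_empty _
        · intro w hw k hk
          rw [ncard_empty, ncard_mem_single e (fun e' => (fun _ : E => u) e' = w)] at hk
          by_cases hwu : u = w
          · have houts : D'.outDeg ⟨w, hw⟩ = D'.outDeg ⟨u, hu_notS⟩ :=
              congrArg D'.outDeg (Subtype.ext hwu.symm)
            rw [if_pos hwu] at hk
            rw [← hwu]
            have hke : k = D'.outDeg ⟨u, hu_notS⟩ + 1 := by omega
            rw [hke]
            exact hm1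
          · rw [if_neg hwu] at hk
            have hFF : F' ⟨w, hw⟩ = F w := if_neg (fun h => hwu h.symm)
            have h2 := hD' ⟨w, hw⟩
            rw [hFF] at h2
            have hke : k = D'.outDeg ⟨w, hw⟩ := by omega
            rw [hke]
            exact h2
      · -- orient e from v to u
        have hth : ∀ e' ∈ ({e} : Finset E),
            G.ends e' = s((fun _ : E => v) e', (fun _ : E => u) e') := by
          intro e' he'
          rw [Finset.mem_singleton] at he'
          subst he'
          exact hspec.symm
        apply hno
        refine ⟨G.extend {v} {e} hND newEnds hN D' (fun _ => v) (fun _ => u) hth, ?_⟩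
        apply Multigraph.extend_avoids
        · intro w hw
          rw [Finset.mem_singleton] at hw
          rw [show w = v from hw]
          rw [ncard_mem_single e (fun e' => (fun _ : E => v) e' = v), if_pos rfl, hFve]
          exact Finset.notMem_empty _
        · intro w hw k hk
          rw [ncard_empty, ncard_mem_single e (fun e' => (fun _ : E => v) e' = w),
            if_neg (fun h : v = w => hw (Finset.mem_singleton.mpr h.symm))] at hk
          by_cases hwu : u = w
          · have houts : D'.outDeg ⟨w, hw⟩ = D'.outDeg ⟨u, hu_notS⟩ :=
              congrArg D'.outDeg (Subtype.ext hwu.symm)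
            rw [← hwu]
            have hke : k = D'.outDeg ⟨u, hu_notS⟩ := by omega
            rw [hke]
            exact hm
          · have hFF : F' ⟨w, hw⟩ = F w := if_neg (fun h => hwu h.symm)
            have h2 := hD' ⟨w, hw⟩
            rw [hFF] at h2
            have hke : k = D'.outDeg ⟨w, hw⟩ := by omega
            rw [hke]
            exact h2
  · -- deg v = 2
    rw [Multigraph.deg] at hd
    obtain ⟨e1, e2, hne, hfil⟩ := Finset.card_eq_two.mp hd
    have hve1 : v ∈ G.ends e1 := by
      have h1 : e1 ∈ Finset.univ.filter fun x => v ∈ G.ends x := by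
        rw [hfil]; exact Finset.mem_insert_self _ _
      exact (Finset.mem_filter.mp h1).2
    have hve2 : v ∈ G.ends e2 := by
      have h1 : e2 ∈ Finset.univ.filter fun x => v ∈ G.ends x := by
        rw [hfil]; exact Finset.mem_insert_of_mem (Finset.mem_singleton_self _)
      exact (Finset.mem_filter.mp h1).2
    have huniq : ∀ e', v ∈ G.ends e' → e' = e1 ∨ e' = e2 := by
      intro e' h'
      have h1 : e' ∈ Finset.univ.filter fun x => v ∈ G.ends x :=
        Finset.mem_filter.mpr ⟨Finset.mem_univ _, h'⟩
      rw [hfil] at h1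
      simpa using h1
    set a := Sym2.Mem.other hve1 with ha_def
    set b := Sym2.Mem.other hve2 with hb_def
    have hspec1 : s(v, a) = G.ends e1 := Sym2.other_spec hve1
    have hspec2 : s(v, b) = G.ends e2 := Sym2.other_spec hve2
    have hanv : a ≠ v := Sym2.other_ne (G.loopless e1) hve1
    have hbnv : b ≠ v := Sym2.other_ne (G.loopless e2) hve2
    have hae1 : a ∈ G.ends e1 := by rw [← hspec1]; exact Sym2.mem_mk_right v a
    have hbe2 : b ∈ G.ends e2 := by rw [← hspec2]; exact Sym2.mem_mk_right v b
    have hmem1 : ∀ w, w ∈ G.ends e1 ↔ (w = v ∨ w = a) := fun w => by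
      rw [← hspec1, Sym2.mem_iff]
    have hmem2 : ∀ w, w ∈ G.ends e2 ↔ (w = v ∨ w = b) := fun w => by
      rw [← hspec2, Sym2.mem_iff]
    by_cases hab : a = b
    · -- both edges join v and a
      have hae2 : a ∈ G.ends e2 := by rw [hab]; exact hbe2
      have hdaa : 2 ≤ G.deg a := by
        have hdeq := G.deg_eq a
        have hsplit := ncard_split ({e1, e2} : Finset E) (fun e' => a ∈ G.ends e')
        have h1 : Nat.card {e' : E // e' ∈ ({e1, e2} : Finset E) ∧ a ∈ G.ends e'} = 2 := by
          rw [ncard_mem_pair hne (fun e' => a ∈ G.ends e'), if_pos hae1, if_pos hae2]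
        omega
      by_cases hda : G.deg a = 2
      · -- delete v, a, e1, e2
        have hFae : F a = ∅ := by
          have := hF a
          rw [← Finset.card_eq_zero]
          omega
        have hauniq : ∀ e', a ∈ G.ends e' → e' = e1 ∨ e' = e2 := by
          rw [Multigraph.deg] at hda
          intro e' h'
          have hsub : ({e1, e2} : Finset E) ⊆ Finset.univ.filter fun x => a ∈ G.ends x := by
            intro x hx
            rcases Finset.mem_insert.mp hx with h1 | h1
            · rw [h1]; exact Finset.mem_filter.mpr ⟨Finset.mem_univ _, hae1⟩
            · rw [Finset.mem_singleton] at h1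
              rw [h1]; exact Finset.mem_filter.mpr ⟨Finset.mem_univ _, hae2⟩
          have hcards : ({e1, e2} : Finset E).card = 2 := Finset.card_pair hne
          have heq : ({e1, e2} : Finset E) = Finset.univ.filter fun x => a ∈ G.ends x :=
            Finset.eq_of_subset_of_card_le hsub (by rw [hda, hcards])
          have h1 : e' ∈ ({e1, e2} : Finset E) := by
            rw [heq]; exact Finset.mem_filter.mpr ⟨Finset.mem_univ _, h'⟩
          simpa using h1
        have hND : ∀ e' (_ : e' ∉ ({e1, e2} : Finset E)), ∀ w ∈ G.ends e',
            w ∉ ({v, a} : Finset V) := by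
          intro e' he' w hw hwS
          rcases Finset.mem_insert.mp hwS with h | h
          · rcases huniq e' (by rwa [h] at hw) with h1 | h1
            · exact he' (by rw [h1]; exact Finset.mem_insert_self _ _)
            · exact he' (by rw [h1]; exact Finset.mem_insert_of_mem (Finset.mem_singleton_self _))
          · rw [Finset.mem_singleton] at h
            rcases hauniq e' (by rwa [h] at hw) with h1 | h1
            · exact he' (by rw [h1]; exact Finset.mem_insert_self _ _)
            · exact he' (by rw [h1]; exact Finset.mem_insert_of_mem (Finset.mem_singleton_self _))
        let newEnds : Empty → Sym2 {w : V // w ∉ ({v, a} : Finset V)} := fun n => n.elim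
        have hN : ∀ n, ¬ (newEnds n).IsDiag := fun n => n.elim
        set G' := G.reduce {v, a} {e1, e2} hND newEnds hN with hG'
        set F' : {w : V // w ∉ ({v, a} : Finset V)} → Finset ℕ := fun w => F w.val with hF'def
        have hF' : ∀ w, 2 * (F' w).card < G'.deg w := by
          rintro ⟨w, hw⟩
          rw [hG', Multigraph.reduce_deg, ncard_empty]
          have hsplit := ncard_split ({e1, e2} : Finset E) (fun e' => w ∈ G.ends e')
          have hdw := G.deg_eq w
          have hFF : F' ⟨w, hw⟩ = F w := rfl
          rw [hFF]
          have hwv : w ≠ v := fun h => hw (by rw [h]; exact Finset.mem_insert_self _ _)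
          have hwa : w ≠ a := fun h =>
            hw (by rw [h]; exact Finset.mem_insert_of_mem (Finset.mem_singleton_self _))
          have h0 : Nat.card {e' : E // e' ∈ ({e1, e2} : Finset E) ∧ w ∈ G.ends e'} = 0 := by
            rw [ncard_mem_pair hne (fun e' => w ∈ G.ends e'),
              if_neg (fun hw2 => by
                rcases (hmem1 w).mp hw2 with h | h
                exacts [hwv h, hwa h]),
              if_neg (fun hw2 => by
                rcases (hmem2 w).mp hw2 with h | h
                exacts [hwv h, hwa (h.trans hab.symm)])]
          have := hF w
          omega
        have hlt : Fintype.card ({e' : E // e' ∉ ({e1, e2} : Finset E)} ⊕ Empty)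
            + Fintype.card {w : V // w ∉ ({v, a} : Finset V)}
            < Fintype.card E + Fintype.card V := by
          have hcE := Multigraph.reduce_cardE (N := Empty) ({e1, e2} : Finset E)
          have hcV := Multigraph.reduce_cardV ({v, a} : Finset V)
          have h1 := ncard_mem_pair' hne
          have h2 := ncard_mem_pair' (Ne.symm hanv)
          have h3 : Fintype.card Empty = 0 := Fintype.card_eq_zero
          omega
        obtain ⟨D', hD'⟩ := hmin _ _ G' F' hlt hF'
        set t : E → V := fun x => if x = e1 then v else a with ht_def
        set h : E → V := fun x => if x = e1 then a else v with hh_def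
        have hte1 : t e1 = v := if_pos rfl
        have hte2 : t e2 = a := if_neg (Ne.symm hne)
        have hhe1 : h e1 = a := if_pos rfl
        have hhe2 : h e2 = v := if_neg (Ne.symm hne)
        have hth : ∀ e' ∈ ({e1, e2} : Finset E), G.ends e' = s(t e', h e') := by
          intro e' he'
          rcases Finset.mem_insert.mp he' with h1 | h1
          · rw [show e' = e1 from h1, hte1, hhe1]
            exact hspec1.symm
          · rw [Finset.mem_singleton] at h1
            rw [show e' = e2 from h1, hte2, hhe2, hab]
            rw [Sym2.eq_swap]
            exact hspec2.symm
        apply hno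
        refine ⟨G.extend {v, a} {e1, e2} hND newEnds hN D' t h hth, ?_⟩
        apply Multigraph.extend_avoids
        · intro w hw
          rcases Finset.mem_insert.mp hw with h1 | h1
          · rw [show w = v from h1]
            rw [ncard_mem_pair hne (fun e' => t e' = v), if_pos hte1,
              if_neg (by rw [hte2]; exact hanv), hFve]
            exact Finset.notMem_empty _
          · rw [Finset.mem_singleton] at h1
            rw [show w = a from h1]
            rw [ncard_mem_pair hne (fun e' => t e' = a),
              if_neg (by rw [hte1]; exact Ne.symm hanv), if_pos hte2, hFae]
            exact Finset.notMem_empty _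
        · intro w hw k hk
          have hwv : w ≠ v := fun h2 => hw (by rw [h2]; exact Finset.mem_insert_self _ _)
          have hwa : w ≠ a := fun h2 =>
            hw (by rw [h2]; exact Finset.mem_insert_of_mem (Finset.mem_singleton_self _))
          rw [ncard_empty, ncard_mem_pair hne (fun e' => t e' = w),
            if_neg (by rw [hte1]; exact fun h2 => hwv h2.symm),
            if_neg (by rw [hte2]; exact fun h2 => hwa h2.symm)] at hk
          have hFF : F' ⟨w, hw⟩ = F w := rfl
          have h2 := hD' ⟨w, hw⟩
          rw [hFF] at h2
          have hke : k = D'.outDeg ⟨w, hw⟩ := by omega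
          rw [hke]
          exact h2
      · -- deg a ≥ 3
        have haS : a ∉ ({v} : Finset V) := by
          simp only [Finset.mem_singleton]
          exact hanv
        have hND : ∀ e' (_ : e' ∉ ({e1, e2} : Finset E)), ∀ w ∈ G.ends e',
            w ∉ ({v} : Finset V) := by
          intro e' he' w hw hwS
          rw [Finset.mem_singleton] at hwS
          rcases huniq e' (by rwa [hwS] at hw) with h1 | h1
          · exact he' (by rw [h1]; exact Finset.mem_insert_self _ _)
          · exact he' (by rw [h1]; exact Finset.mem_insert_of_mem (Finset.mem_singleton_self _))
        let newEnds : Empty → Sym2 {w : V // w ∉ ({v} : Finset V)} := fun n => n.elim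
        have hN : ∀ n, ¬ (newEnds n).IsDiag := fun n => n.elim
        set G' := G.reduce {v} {e1, e2} hND newEnds hN with hG'
        set F' : {w : V // w ∉ ({v} : Finset V)} → Finset ℕ :=
          fun w => if w.val = a then (F a).filter (fun n => n + 1 ∈ F a) else F w.val with hF'def
        have hF' : ∀ w, 2 * (F' w).card < G'.deg w := by
          rintro ⟨w, hw⟩
          rw [hG', Multigraph.reduce_deg, ncard_empty]
          have hsplit := ncard_split ({e1, e2} : Finset E) (fun e' => w ∈ G.ends e')
          have hdw := G.deg_eq w
          by_cases hwa : w = a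
          · have hFF : F' ⟨w, hw⟩ = (F a).filter (fun n => n + 1 ∈ F a) := if_pos hwa
            rw [hFF]
            have h1 : Nat.card {e' : E // e' ∈ ({e1, e2} : Finset E) ∧ w ∈ G.ends e'} = 2 := by
              rw [ncard_mem_pair hne (fun e' => w ∈ G.ends e'),
                if_pos (by rw [hwa]; exact hae1), if_pos (by rw [hwa]; exact hae2)]
            have hdwu : G.deg w = G.deg a := by rw [hwa]
            rcases (F a).eq_empty_or_nonempty with hFu | hFu
            · rw [hFu]
              simp only [Finset.filter_empty, Finset.card_empty]
              omega
            · have hlt2 := card_filter_succ_lt hFu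
              have hFub := hF a
              omega
          · have hFF : F' ⟨w, hw⟩ = F w := if_neg hwa
            rw [hFF]
            have hwv : w ≠ v := fun h => hw (by rw [h]; exact Finset.mem_singleton_self v)
            have h0 : Nat.card {e' : E // e' ∈ ({e1, e2} : Finset E) ∧ w ∈ G.ends e'} = 0 := by
              rw [ncard_mem_pair hne (fun e' => w ∈ G.ends e'),
                if_neg (fun hw2 => by
                  rcases (hmem1 w).mp hw2 with h | h
                  exacts [hwv h, hwa h]),
                if_neg (fun hw2 => by
                  rcases (hmem2 w).mp hw2 with h | h
                  exacts [hwv h, hwa (h.trans hab.symm)])]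
            have := hF w
            omega
        have hlt : Fintype.card ({e' : E // e' ∉ ({e1, e2} : Finset E)} ⊕ Empty)
            + Fintype.card {w : V // w ∉ ({v} : Finset V)}
            < Fintype.card E + Fintype.card V := by
          have hcE := Multigraph.reduce_cardE (N := Empty) ({e1, e2} : Finset E)
          have hcV := Multigraph.reduce_cardV ({v} : Finset V)
          have h1 := ncard_mem_pair' hne
          have h2 := ncard_mem_single' v
          have h3 : Fintype.card Empty = 0 := Fintype.card_eq_zero
          omega
        obtain ⟨D', hD'⟩ := hmin _ _ G' F' hlt hF'
        have hm' : D'.outDeg ⟨a, haS⟩ ∉ (F a).filter (fun n => n + 1 ∈ F a) := by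
          have h2 := hD' ⟨a, haS⟩
          have hFF : F' ⟨a, haS⟩ = (F a).filter (fun n => n + 1 ∈ F a) := if_pos rfl
          rwa [hFF] at h2
        by_cases hm : D'.outDeg ⟨a, haS⟩ ∈ F a
        · -- orient e1 : a → v, e2 : v → a
          have hm1 : D'.outDeg ⟨a, haS⟩ + 1 ∉ F a := fun h1 =>
            hm' (Finset.mem_filter.mpr ⟨hm, h1⟩)
          set t : E → V := fun x => if x = e1 then a else v with ht_def
          set h : E → V := fun x => if x = e1 then v else a with hh_def
          have hte1 : t e1 = a := if_pos rfl
          have hte2 : t e2 = v := if_neg (Ne.symm hne)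
          have hhe1 : h e1 = v := if_pos rfl
          have hhe2 : h e2 = a := if_neg (Ne.symm hne)
          have hth : ∀ e' ∈ ({e1, e2} : Finset E), G.ends e' = s(t e', h e') := by
            intro e' he'
            rcases Finset.mem_insert.mp he' with h1 | h1
            · rw [show e' = e1 from h1, hte1, hhe1, Sym2.eq_swap]
              exact hspec1.symm
            · rw [Finset.mem_singleton] at h1
              rw [show e' = e2 from h1, hte2, hhe2, hab]
              exact hspec2.symm
          apply hno
          refine ⟨G.extend {v} {e1, e2} hND newEnds hN D' t h hth, ?_⟩
          apply Multigraph.extend_avoids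
          · intro w hw
            rw [Finset.mem_singleton] at hw
            rw [show w = v from hw]
            rw [ncard_mem_pair hne (fun e' => t e' = v),
              if_neg (by rw [hte1]; exact hanv), if_pos hte2, hFve]
            exact Finset.notMem_empty _
          · intro w hw k hk
            have hwv : w ≠ v := fun h2 => hw (by rw [h2]; exact Finset.mem_singleton_self v)
            rw [ncard_empty, ncard_mem_pair hne (fun e' => t e' = w)] at hk
            simp only [hte1, hte2] at hk
            rw [if_neg (fun h2 : v = w => hwv h2.symm)] at hk
            by_cases hwa : a = w
            · have houts : D'.outDeg ⟨w, hw⟩ = D'.outDeg ⟨a, haS⟩ :=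
                congrArg D'.outDeg (Subtype.ext hwa.symm)
              rw [if_pos hwa] at hk
              rw [← hwa]
              have hke : k = D'.outDeg ⟨a, haS⟩ + 1 := by omega
              rw [hke]
              exact hm1
            · rw [if_neg hwa] at hk
              have hFF : F' ⟨w, hw⟩ = F w := if_neg (fun h2 => hwa h2.symm)
              have h2 := hD' ⟨w, hw⟩
              rw [hFF] at h2
              have hke : k = D'.outDeg ⟨w, hw⟩ := by omega
              rw [hke]
              exact h2
        · -- orient both edges out of v
          have hth : ∀ e' ∈ ({e1, e2} : Finset E),
              G.ends e' = s((fun _ : E => v) e', (fun _ : E => a) e') := by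
            intro e' he'
            rcases Finset.mem_insert.mp he' with h1 | h1
            · rw [show e' = e1 from h1]
              exact hspec1.symm
            · rw [Finset.mem_singleton] at h1
              rw [show e' = e2 from h1, hab]
              exact hspec2.symm
          apply hno
          refine ⟨G.extend {v} {e1, e2} hND newEnds hN D' (fun _ => v) (fun _ => a) hth, ?_⟩
          apply Multigraph.extend_avoids
          · intro w hw
            rw [Finset.mem_singleton] at hw
            rw [show w = v from hw]
            rw [ncard_mem_pair hne (fun e' => (fun _ : E => v) e' = v), if_pos rfl, hFve]
            exact Finset.notMem_empty _
          · intro w hw k hk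
            have hwv : w ≠ v := fun h2 => hw (by rw [h2]; exact Finset.mem_singleton_self v)
            rw [ncard_empty, ncard_mem_pair hne (fun e' => (fun _ : E => v) e' = w),
              if_neg (fun h2 : v = w => hwv h2.symm)] at hk
            by_cases hwa : a = w
            · have houts : D'.outDeg ⟨w, hw⟩ = D'.outDeg ⟨a, haS⟩ :=
                congrArg D'.outDeg (Subtype.ext hwa.symm)
              rw [← hwa]
              have hke : k = D'.outDeg ⟨a, haS⟩ := by omega
              rw [hke]
              exact hm
            · have hFF : F' ⟨w, hw⟩ = F w := if_neg (fun h2 => hwa h2.symm)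
              have h2 := hD' ⟨w, hw⟩
              rw [hFF] at h2
              have hke : k = D'.outDeg ⟨w, hw⟩ := by omega
              rw [hke]
              exact h2
    · -- a ≠ b : suppress v, adding a new edge between a and b
      have haS : a ∉ ({v} : Finset V) := by
        simp only [Finset.mem_singleton]; exact hanv
      have hbS : b ∉ ({v} : Finset V) := by
        simp only [Finset.mem_singleton]; exact hbnv
      have hND : ∀ e' (_ : e' ∉ ({e1, e2} : Finset E)), ∀ w ∈ G.ends e',
          w ∉ ({v} : Finset V) := by
        intro e' he' w hw hwS
        rw [Finset.mem_singleton] at hwS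
        rcases huniq e' (by rwa [hwS] at hw) with h1 | h1
        · exact he' (by rw [h1]; exact Finset.mem_insert_self _ _)
        · exact he' (by rw [h1]; exact Finset.mem_insert_of_mem (Finset.mem_singleton_self _))
      let newEnds : PUnit → Sym2 {w : V // w ∉ ({v} : Finset V)} :=
        fun _ => s(⟨a, haS⟩, ⟨b, hbS⟩)
      have hN : ∀ n, ¬ (newEnds n).IsDiag := by
        intro n hd
        rw [show newEnds n = s((⟨a, haS⟩ : {w : V // w ∉ ({v} : Finset V)}), ⟨b, hbS⟩) from rfl,
          Sym2.mk_isDiag_iff] at hd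
        exact hab (congrArg Subtype.val hd)
      set G' := G.reduce {v} {e1, e2} hND newEnds hN with hG'
      set F' : {w : V // w ∉ ({v} : Finset V)} → Finset ℕ := fun w => F w.val with hF'def
      have hmemN : ∀ (w : V) (hw : w ∉ ({v} : Finset V)),
          ((⟨w, hw⟩ : {w : V // w ∉ ({v} : Finset V)}) ∈ newEnds PUnit.unit)
            ↔ (w = a ∨ w = b) := by
        intro w hw
        rw [show newEnds PUnit.unit
          = s((⟨a, haS⟩ : {w : V // w ∉ ({v} : Finset V)}), ⟨b, hbS⟩) from rfl, Sym2.mem_iff]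
        constructor
        · rintro (h | h)
          · exact Or.inl (congrArg Subtype.val h)
          · exact Or.inr (congrArg Subtype.val h)
        · rintro (h | h)
          · exact Or.inl (Subtype.ext h)
          · exact Or.inr (Subtype.ext h)
      have hF' : ∀ w, 2 * (F' w).card < G'.deg w := by
        rintro ⟨w, hw⟩
        rw [hG', Multigraph.reduce_deg,
          ncard_punit (fun n => (⟨w, hw⟩ : {w : V // w ∉ ({v} : Finset V)}) ∈ newEnds n),
          if_congr (hmemN w hw) rfl rfl]
        have hsplit := ncard_split ({e1, e2} : Finset E) (fun e' => w ∈ G.ends e')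
        have hdw := G.deg_eq w
        have hFF : F' ⟨w, hw⟩ = F w := rfl
        rw [hFF]
        have hwv : w ≠ v := fun h => hw (by rw [h]; exact Finset.mem_singleton_self v)
        by_cases hwa : w = a
        · have h1 : Nat.card {e' : E // e' ∈ ({e1, e2} : Finset E) ∧ w ∈ G.ends e'} = 1 := by
            rw [ncard_mem_pair hne (fun e' => w ∈ G.ends e'),
              if_pos (by rw [hwa]; exact hae1),
              if_neg (fun hw2 => by
                rcases (hmem2 w).mp hw2 with h | h
                exacts [hwv h, hab (hwa.symm.trans h)])]
          rw [if_pos (Or.inl hwa)]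
          have := hF w
          omega
        · by_cases hwb : w = b
          · have h1 : Nat.card {e' : E // e' ∈ ({e1, e2} : Finset E) ∧ w ∈ G.ends e'} = 1 := by
              rw [ncard_mem_pair hne (fun e' => w ∈ G.ends e'),
                if_neg (fun hw2 => by
                  rcases (hmem1 w).mp hw2 with h | h
                  exacts [hwv h, hwa h]),
                if_pos (by rw [hwb]; exact hbe2)]
            rw [if_pos (Or.inr hwb)]
            have := hF w
            omega
          · have h0 : Nat.card {e' : E // e' ∈ ({e1, e2} : Finset E) ∧ w ∈ G.ends e'} = 0 := by
              rw [ncard_mem_pair hne (fun e' => w ∈ G.ends e'),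
                if_neg (fun hw2 => by
                  rcases (hmem1 w).mp hw2 with h | h
                  exacts [hwv h, hwa h]),
                if_neg (fun hw2 => by
                  rcases (hmem2 w).mp hw2 with h | h
                  exacts [hwv h, hwb h])]
            rw [if_neg (by rintro (h | h); exacts [hwa h, hwb h])]
            have := hF w
            omega
      have hlt : Fintype.card ({e' : E // e' ∉ ({e1, e2} : Finset E)} ⊕ PUnit)
          + Fintype.card {w : V // w ∉ ({v} : Finset V)}
          < Fintype.card E + Fintype.card V := by
        have hcE := Multigraph.reduce_cardE (N := PUnit) ({e1, e2} : Finset E)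
        have hcV := Multigraph.reduce_cardV ({v} : Finset V)
        have h1 := ncard_mem_pair' hne
        have h2 := ncard_mem_single' v
        have h3 : Fintype.card PUnit = 1 := by simp
        omega
      obtain ⟨D', hD'⟩ := hmin _ _ G' F' hlt hF'
      have hτmem : D'.tail (Sum.inr PUnit.unit) = ⟨a, haS⟩
          ∨ D'.tail (Sum.inr PUnit.unit) = ⟨b, hbS⟩ := by
        have hc2 : s((⟨a, haS⟩ : {w : V // w ∉ ({v} : Finset V)}), ⟨b, hbS⟩)
            = s(D'.tail (Sum.inr PUnit.unit), D'.head (Sum.inr PUnit.unit)) :=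
          D'.consistent (Sum.inr PUnit.unit)
        have h1 : D'.tail (Sum.inr PUnit.unit)
            ∈ s((⟨a, haS⟩ : {w : V // w ∉ ({v} : Finset V)}), ⟨b, hbS⟩) := by
          rw [hc2]; exact Sym2.mem_mk_left _ _
        rwa [Sym2.mem_iff] at h1
      rcases hτmem with hτ | hτ
      · -- new edge oriented from a : e1 gets a → v, e2 gets v → b
        set t : E → V := fun x => if x = e1 then a else v with ht_def
        set h : E → V := fun x => if x = e1 then v else b with hh_def
        have hte1 : t e1 = a := if_pos rfl
        have hte2 : t e2 = v := if_neg (Ne.symm hne)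
        have hhe1 : h e1 = v := if_pos rfl
        have hhe2 : h e2 = b := if_neg (Ne.symm hne)
        have hth : ∀ e' ∈ ({e1, e2} : Finset E), G.ends e' = s(t e', h e') := by
          intro e' he'
          rcases Finset.mem_insert.mp he' with h1 | h1
          · rw [show e' = e1 from h1, hte1, hhe1, Sym2.eq_swap]
            exact hspec1.symm
          · rw [Finset.mem_singleton] at h1
            rw [show e' = e2 from h1, hte2, hhe2]
            exact hspec2.symm
        apply hno
        refine ⟨G.extend {v} {e1, e2} hND newEnds hN D' t h hth, ?_⟩
        apply Multigraph.extend_avoids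
        · intro w hw
          rw [Finset.mem_singleton] at hw
          rw [show w = v from hw]
          rw [ncard_mem_pair hne (fun e' => t e' = v),
            if_neg (by rw [hte1]; exact hanv), if_pos hte2, hFve]
          exact Finset.notMem_empty _
        · intro w hw k hk
          have hwv : w ≠ v := fun h2 => hw (by rw [h2]; exact Finset.mem_singleton_self v)
          rw [ncard_punit (fun n => D'.tail (Sum.inr n) = ⟨w, hw⟩),
            ncard_mem_pair hne (fun e' => t e' = w)] at hk
          simp only [hte1, hte2] at hk
          rw [if_neg (fun h2 : v = w => hwv h2.symm)] at hk
          have hFF : F' ⟨w, hw⟩ = F w := rfl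
          have h2 := hD' ⟨w, hw⟩
          rw [hFF] at h2
          by_cases hwa : a = w
          · rw [if_pos (hτ.trans (Subtype.ext hwa)), if_pos hwa] at hk
            have hke : k = D'.outDeg ⟨w, hw⟩ := by omega
            rw [hke]
            exact h2
          · rw [if_neg (fun h3 => hwa (congrArg Subtype.val (hτ.symm.trans h3))),
              if_neg hwa] at hk
            have hke : k = D'.outDeg ⟨w, hw⟩ := by omega
            rw [hke]
            exact h2
      · -- new edge oriented from b : e2 gets b → v, e1 gets v → a
        set t : E → V := fun x => if x = e2 then b else v with ht_def
        set h : E → V := fun x => if x = e2 then v else a with hh_def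
        have hte1 : t e1 = v := if_neg hne
        have hte2 : t e2 = b := if_pos rfl
        have hhe1 : h e1 = a := if_neg hne
        have hhe2 : h e2 = v := if_pos rfl
        have hth : ∀ e' ∈ ({e1, e2} : Finset E), G.ends e' = s(t e', h e') := by
          intro e' he'
          rcases Finset.mem_insert.mp he' with h1 | h1
          · rw [show e' = e1 from h1, hte1, hhe1]
            exact hspec1.symm
          · rw [Finset.mem_singleton] at h1
            rw [show e' = e2 from h1, hte2, hhe2, Sym2.eq_swap]
            exact hspec2.symm
        apply hno
        refine ⟨G.extend {v} {e1, e2} hND newEnds hN D' t h hth, ?_⟩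
        apply Multigraph.extend_avoids
        · intro w hw
          rw [Finset.mem_singleton] at hw
          rw [show w = v from hw]
          rw [ncard_mem_pair hne (fun e' => t e' = v),
            if_pos hte1, if_neg (by rw [hte2]; exact hbnv), hFve]
          exact Finset.notMem_empty _
        · intro w hw k hk
          have hwv : w ≠ v := fun h2 => hw (by rw [h2]; exact Finset.mem_singleton_self v)
          rw [ncard_punit (fun n => D'.tail (Sum.inr n) = ⟨w, hw⟩),
            ncard_mem_pair hne (fun e' => t e' = w)] at hk
          simp only [hte1, hte2] at hk
          rw [if_neg (fun h2 : v = w => hwv h2.symm)] at hk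
          have hFF : F' ⟨w, hw⟩ = F w := rfl
          have h2 := hD' ⟨w, hw⟩
          rw [hFF] at h2
          by_cases hwb : b = w
          · rw [if_pos (hτ.trans (Subtype.ext hwb)), if_pos hwb] at hk
            have hke : k = D'.outDeg ⟨w, hw⟩ := by omega
            rw [hke]
            exact h2
          · rw [if_neg (fun h3 => hwb (congrArg Subtype.val (hτ.symm.trans h3))),
              if_neg hwb] at hk
            have hke : k = D'.outDeg ⟨w, hw⟩ := by omega
            rw [hke]
            exact h2
end

section
/- For every positive integer k, every (2k+1)-regular graph admits an orientation in which no vertex has out-degree in {1, 2, …, k}. -/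
attribute [local instance] Classical.propDecidable

/-! Take a maximal independent set `I`. Each vertex outside `I` has an edge into `I`, so for
`T` disjoint from `I` the handshake identity `(2k+1)|T| = 2 e(T) + cut(T)` with `cut(T) ≥ |T|`
gives `e(T) ≤ k|T|`. Hence every vertex set `S` spans at most `∑_{v ∈ S ∩ I} deg v + k |S \ I|`
edges, and by Hakimi's theorem (a consequence of Hall's theorem) some orientation has in-degree
at most `k` outside `I`. Turning every edge that meets `I` towards `I` keeps this bound and makes
`I` a set of sinks; every other vertex then has out-degree at least `(2k+1) - k = k+1`. -/

open Finset

namespace Multigraph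

variable {V E : Type} {G : Multigraph V E}

namespace Orientation

theorem tail_ne_head (D : G.Orientation) (e : E) : D.tail e ≠ D.head e := fun h =>
  G.loopless e (by rw [D.consistent e, Sym2.mk_isDiag_iff]; exact h)

theorem mem_ends_iff (D : G.Orientation) {e : E} {v : V} :
    v ∈ G.ends e ↔ v = D.tail e ∨ v = D.head e := by
  rw [D.consistent e, Sym2.mem_iff]

theorem forall_mem_ends_iff (D : G.Orientation) {e : E} {p : V → Prop} :
    (∀ w ∈ G.ends e, p w) ↔ p (D.tail e) ∧ p (D.head e) := by
  simp only [D.mem_ends_iff, or_imp, forall_and, forall_eq]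

theorem exists_mem_ends_iff (D : G.Orientation) {e : E} {p : V → Prop} :
    (∃ w ∈ G.ends e, p w) ↔ p (D.tail e) ∨ p (D.head e) := by
  simp only [D.mem_ends_iff, or_and_right, exists_or, exists_eq_left]

noncomputable def inDeg [Fintype E] (D : G.Orientation) (v : V) : ℕ :=
  #{e | D.head e = v}

theorem deg_eq_outDeg_add_inDeg [Fintype E] (D : G.Orientation) (v : V) :
    G.deg v = D.outDeg v + D.inDeg v := by
  rw [deg, outDeg, inDeg, ← card_union_of_disjoint
    (disjoint_filter.2 fun e _ h₁ h₂ => D.tail_ne_head e (h₁.trans h₂.symm)), ← filter_or]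
  simp only [D.mem_ends_iff, eq_comm]

theorem sum_outDeg [Fintype E] (D : G.Orientation) (S : Finset V) :
    ∑ v ∈ S, D.outDeg v = #{e | D.tail e ∈ S} :=
  sum_card_fiberwise_eq_card_filter _ _ _

theorem sum_inDeg [Fintype E] (D : G.Orientation) (S : Finset V) :
    ∑ v ∈ S, D.inDeg v = #{e | D.head e ∈ S} :=
  sum_card_fiberwise_eq_card_filter _ _ _

end Orientation

instance (G : Multigraph V E) : Nonempty G.Orientation :=
  ⟨⟨fun e => (G.ends e).out.1, fun e => (G.ends e).out.2, fun _ => (Quot.out_eq _).symm⟩⟩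

theorem finite_of_forall_deg_pos [Fintype E] (h : ∀ v, 0 < G.deg v) : Finite V := by
  obtain ⟨D⟩ : Nonempty G.Orientation := inferInstance
  refine Set.finite_univ_iff.1 <|
    ((Set.finite_range D.tail).union (Set.finite_range D.head)).subset fun v _ => ?_
  obtain ⟨e, he⟩ := card_pos.1 (h v)
  rcases D.mem_ends_iff.1 (mem_filter.1 he).2 with rfl | rfl
  exacts [Or.inl ⟨e, rfl⟩, Or.inr ⟨e, rfl⟩]

theorem sum_deg_eq_two_mul_eIn_add_cut [Fintype E] (G : Multigraph V E) (S : Finset V) :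
    ∑ v ∈ S, G.deg v = 2 * G.eIn S + G.cut S := by
  obtain ⟨D⟩ : Nonempty G.Orientation := inferInstance
  have hIn : G.eIn S = #{e | D.tail e ∈ S ∧ D.head e ∈ S} := by
    simp only [eIn, D.forall_mem_ends_iff]
  have hCut : G.cut S =
      #{e | (D.tail e ∈ S ∨ D.head e ∈ S) ∧ ¬(D.tail e ∈ S ∧ D.head e ∈ S)} := by
    simp only [cut, D.forall_mem_ends_iff, D.exists_mem_ends_iff]
  calc ∑ v ∈ S, G.deg v = #{e | D.tail e ∈ S} + #{e | D.head e ∈ S} := by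
        rw [sum_congr rfl fun v _ => D.deg_eq_outDeg_add_inDeg v, sum_add_distrib,
          D.sum_outDeg, D.sum_inDeg]
    _ = #{e | D.tail e ∈ S ∨ D.head e ∈ S} + #{e | D.tail e ∈ S ∧ D.head e ∈ S} := by
        rw [filter_or, filter_and, card_union_add_card_inter]
    _ = 2 * G.eIn S + G.cut S := by
        rw [hIn, hCut, ← card_filter_add_card_filter_not (s := {e | D.tail e ∈ S ∨ D.head e ∈ S})
          (fun e => D.tail e ∈ S ∧ D.head e ∈ S), filter_filter, filter_filter]
        simp only [and_iff_right_of_imp (fun h : D.tail _ ∈ S ∧ D.head _ ∈ S => Or.inl h.1)]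
        ring

theorem exists_orientation_inDeg_le [Fintype E] (b : V → ℕ)
    (hb : ∀ S : Finset V, G.eIn S ≤ ∑ v ∈ S, b v) :
    ∃ D : G.Orientation, ∀ v, D.inDeg v ≤ b v := by
  -- Hall's theorem: each edge picks its head among the `b v` slots of either endpoint `v`.
  let slots (e : E) : Finset (Σ _ : V, ℕ) := (G.ends e).toFinset.sigma fun v => range (b v)
  obtain ⟨f, hf, hslot⟩ := (all_card_le_biUnion_card_iff_exists_injective slots).1 fun F => by
    let U := F.biUnion fun e => (G.ends e).toFinset
    calc #F ≤ G.eIn U := card_le_card fun e he => by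
          simpa [eIn, U] using fun w hw => ⟨e, he, hw⟩
      _ ≤ ∑ v ∈ U, b v := hb U
      _ = #(U.sigma fun v => range (b v)) := by simp
      _ ≤ #(F.biUnion slots) := card_le_card fun ⟨v, i⟩ h => by
          simp only [U, slots, mem_sigma, mem_biUnion, Sym2.mem_toFinset, mem_range] at h ⊢
          obtain ⟨⟨e, he, hv⟩, hi⟩ := h
          exact ⟨e, he, hv, hi⟩
  have hhead (e : E) : (f e).1 ∈ G.ends e := Sym2.mem_toFinset.1 (mem_sigma.1 (hslot e)).1
  let D : G.Orientation :=
    ⟨fun e => Sym2.Mem.other (hhead e), fun e => (f e).1, fun e => by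
      rw [Sym2.eq_swap, Sym2.other_spec]⟩
  refine ⟨D, fun v => ?_⟩
  calc D.inDeg v ≤ #(range (b v)) := card_le_card_of_injOn (fun e => (f e).2)
        (fun e he => by
          have : (f e).1 = v := (mem_filter.1 he).2
          simpa [this] using (mem_sigma.1 (hslot e)).2)
        (fun e he e' he' h => hf (Sigma.ext ((mem_filter.1 he).2.trans (mem_filter.1 he').2.symm)
          (heq_of_eq h)))
    _ = b v := card_range _

def IsIndepSet (G : Multigraph V E) (I : Finset V) : Prop :=
  ∀ e, ¬ ∀ w ∈ G.ends e, w ∈ I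

theorem exists_isIndepSet_dominating [Finite V] (G : Multigraph V E) :
    ∃ I : Finset V, G.IsIndepSet I ∧ ∀ w ∉ I, ∃ e y, y ∈ I ∧ G.ends e = s(w, y) := by
  obtain ⟨D⟩ : Nonempty G.Orientation := inferInstance
  have hempty : G.IsIndepSet ∅ := fun e h => by simpa using h _ (D.mem_ends_iff.2 (Or.inl rfl))
  obtain ⟨I, hI, hmax⟩ :=
    (Set.toFinite {I : Finset V | G.IsIndepSet I}).exists_maximal ⟨∅, hempty⟩
  refine ⟨I, hI, fun w hw => ?_⟩
  have : ¬ G.IsIndepSet (insert w I) := fun h =>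
    hw (hmax h (subset_insert w I) (mem_insert_self w I))
  obtain ⟨e, he⟩ := not_forall.1 this
  rw [not_not, D.forall_mem_ends_iff, mem_insert, mem_insert] at he
  rcases he with ⟨ht | ht, hh | hh⟩
  · exact absurd (ht.trans hh.symm) (D.tail_ne_head e)
  · exact ⟨e, _, hh, ht ▸ D.consistent e⟩
  · exact ⟨e, _, ht, by rw [D.consistent e, hh, Sym2.eq_swap]⟩
  · exact absurd (D.forall_mem_ends_iff.2 ⟨ht, hh⟩) (hI e)

theorem card_le_cut [Fintype E] {T : Finset V}
    (h : ∀ w ∈ T, ∃ e y, y ∉ T ∧ G.ends e = s(w, y)) : #T ≤ G.cut T := by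
  refine card_le_card_of_forall_subsingleton (fun w e => ∃ y ∉ T, G.ends e = s(w, y))
    (fun w hw => ?_) (fun e _ => ?_)
  · obtain ⟨e, y, hy, he⟩ := h w hw
    refine ⟨e, ?_, y, hy, he⟩
    simp only [mem_filter, mem_univ, true_and, he, Sym2.mem_iff]
    aesop
  · rintro w ⟨hw, y, hy, he⟩ w' ⟨hw', y', hy', he'⟩
    rcases Sym2.eq_iff.1 (he.symm.trans he') with ⟨h, -⟩ | ⟨h, -⟩
    · exact h
    · exact absurd (h ▸ hw) hy'

theorem eIn_le_eIn_sdiff_add_sum_deg [Fintype E] (S A : Finset V) :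
    G.eIn S ≤ G.eIn (S \ A) + ∑ v ∈ S ∩ A, G.deg v := by
  calc G.eIn S
      ≤ #(({e | ∀ w ∈ G.ends e, w ∈ S \ A} : Finset E) ∪
          (S ∩ A).biUnion fun v => {e | v ∈ G.ends e}) :=
        card_le_card fun e he => by
          have hS : ∀ w ∈ G.ends e, w ∈ S := (mem_filter.1 he).2
          by_cases hA : ∃ w ∈ G.ends e, w ∈ A
          · obtain ⟨w, hw, hwA⟩ := hA
            exact mem_union_right _ (mem_biUnion.2 ⟨w, mem_inter.2 ⟨hS w hw, hwA⟩, by simpa⟩)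
          · push Not at hA
            exact mem_union_left _ (by simpa using fun w hw => ⟨hS w hw, hA w hw⟩)
    _ ≤ G.eIn (S \ A) + ∑ v ∈ S ∩ A, G.deg v :=
        (card_union_le _ _).trans (Nat.add_le_add_left card_biUnion_le _)

theorem eIn_le_mul_card_of_regular [Fintype E] {k : ℕ} (hreg : ∀ v, G.deg v = 2 * k + 1)
    {T : Finset V} (hT : #T ≤ G.cut T) : G.eIn T ≤ k * #T := by
  have h := G.sum_deg_eq_two_mul_eIn_add_cut T
  rw [sum_congr rfl fun v _ => hreg v, sum_const, smul_eq_mul] at h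
  have : #T * (2 * k + 1) = 2 * (k * #T) + #T := by ring
  omega

namespace Orientation

noncomputable def pointInto (D : G.Orientation) (I : Finset V) : G.Orientation where
  tail e := if D.tail e ∈ I then D.head e else D.tail e
  head e := if D.tail e ∈ I then D.tail e else D.head e
  consistent e := by
    split_ifs
    · rw [D.consistent e, Sym2.eq_swap]
    · exact D.consistent e

theorem inDeg_pointInto_le [Fintype E] (D : G.Orientation) {I : Finset V} {v : V} (hv : v ∉ I) :
    (D.pointInto I).inDeg v ≤ D.inDeg v :=
  card_le_card <| monotone_filter_right _ fun e _ he => by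
    change (if D.tail e ∈ I then D.tail e else D.head e) = v at he
    split_ifs at he with ht
    · exact absurd (he ▸ ht) hv
    · exact he

theorem outDeg_pointInto_eq_zero [Fintype E] (D : G.Orientation) {I : Finset V}
    (hI : G.IsIndepSet I) {v : V} (hv : v ∈ I) : (D.pointInto I).outDeg v = 0 :=
  card_eq_zero.2 <| filter_eq_empty_iff.2 fun e _ he => by
    change (if D.tail e ∈ I then D.head e else D.tail e) = v at he
    split_ifs at he with ht
    · exact hI e (D.forall_mem_ends_iff.2 ⟨ht, he ▸ hv⟩)
    · exact ht (he ▸ hv)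

end Orientation

end Multigraph

theorem stmt12_general {V E : Type} [Fintype E] (k : ℕ)
    (G : Multigraph V E) (hreg : ∀ v, G.deg v = 2 * k + 1) :
    ∃ D : G.Orientation, ∀ v, D.outDeg v ∉ Finset.Icc 1 k := by
  have : Finite V := G.finite_of_forall_deg_pos fun v => by rw [hreg]; omega
  obtain ⟨I, hI, hdom⟩ := G.exists_isIndepSet_dominating
  obtain ⟨D, hD⟩ := G.exists_orientation_inDeg_le (fun v => if v ∈ I then G.deg v else k)
    fun S => by
      have hcut : #(S \ I) ≤ G.cut (S \ I) := G.card_le_cut fun w hw => by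
        obtain ⟨e, y, hy, he⟩ := hdom w (mem_sdiff.1 hw).2
        exact ⟨e, y, fun h => (mem_sdiff.1 h).2 hy, he⟩
      rw [sum_ite, filter_mem_eq_inter, filter_notMem_eq_sdiff, sum_const, smul_eq_mul]
      linarith [G.eIn_le_eIn_sdiff_add_sum_deg S I, G.eIn_le_mul_card_of_regular hreg hcut]
  refine ⟨D.pointInto I, fun v hv => ?_⟩
  rw [mem_Icc] at hv
  by_cases hvI : v ∈ I
  · have := D.outDeg_pointInto_eq_zero hI hvI
    omega
  · have hdeg := (D.pointInto I).deg_eq_outDeg_add_inDeg v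
    have hin := (D.inDeg_pointInto_le hvI).trans (hD v)
    rw [if_neg hvI] at hin
    have := hreg v
    omega

/-- every `(2k+1)`-regular graph admits a `{1,…,k}`-avoiding
orientation. -/
theorem stmt12 {V E : Type} [Fintype E] (k : ℕ) (hk : 0 < k)
    (G : Multigraph V E) (hreg : ∀ v, G.deg v = 2 * k + 1) :
    ∃ D : G.Orientation, ∀ v, D.outDeg v ∉ Finset.Icc 1 k :=
  stmt12_general k G hreg
end
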